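/- Residual bias when the third treatment's confounding is ignored (the 'third treatment ignored' scenario of the simulation study): fix distinct treatments j, k ∈ J and define the partially adjusted outcome Ycf' ω := Yobs ω − p(k)·c(j, k) if A ω = j, Ycf' ω := Yobs ω − p(j)·c(k, j) if A ω = k, and Ycf' ω := Yobs ω otherwise (i.e. only the confounding functions between j and k are adjusted for, while those involving the remaining treatments are set to zero). Then (E[Ycf' | A = j] − E[Ycf' | A = k]) − E[Y j − Y k] = −Σ_{l ∈ J, l ≠ j, l ≠ k} p(l)·(c(k, l) − c(j, l)); in particular the partially adjusted contrast remains biased whenever this sum is nonzero. -/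

import Mathlib

open MeasureTheory ProbabilityTheory

noncomputable section

variable {Ω J : Type*}

/-- `condMean μ A Z j` is `E[Z | A = j]`, the mean of `Z` under the conditional
measure `μ[|{A = j}]`. -/
def condMean [MeasurableSpace Ω] (μ : Measure Ω) (A : Ω → J) (Z : Ω → ℝ) (j : J) : ℝ :=
  ∫ ω, Z ω ∂(μ[|{ω | A ω = j}])

/-- `treatProb μ A j` is `p(j) = μ{ω : A ω = j}`. -/
def treatProb [MeasurableSpace Ω] (μ : Measure Ω) (A : Ω → J) (j : J) : ℝ :=
  (μ {ω | A ω = j}).toReal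

/-- The confounding function `c(j,k) = E[Y j | A = j] - E[Y j | A = k]`. -/
def confFun [MeasurableSpace Ω] (μ : Measure Ω) (A : Ω → J) (Y : J → Ω → ℝ) (j k : J) : ℝ :=
  condMean μ A (Y j) j - condMean μ A (Y j) k

/-- The partially adjusted outcome that only corrects for the confounding functions
between the pair `(j, k)`, setting those involving the remaining treatments to zero. -/
def partialAdjOutcome [MeasurableSpace Ω] [DecidableEq J]
    (μ : Measure Ω) (A : Ω → J) (Y : J → Ω → ℝ) (j k : J) (ω : Ω) : ℝ :=
  if A ω = j then Y (A ω) ω - treatProb μ A k * confFun μ A Y j k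
  else if A ω = k then Y (A ω) ω - treatProb μ A j * confFun μ A Y k j
  else Y (A ω) ω

/-! Conditioning on `A = j` shifts the partially adjusted outcome by a constant, so its two
conditional means are `E[Y j | A = j] - p(k) c(j, k)` and `E[Y k | A = k] - p(j) c(k, j)`.
By the law of total expectation and `∑ l, p(l) = 1`, the `p`-weighted average of the confounding
function is the bias of the naive mean: `∑ l, p(l) c(j, l) = E[Y j | A = j] - E[Y j]`.
Subtracting the `j`- and `k`-terms from these full sums leaves exactly the terms of the
remaining treatments. -/

theorem Finset.sum_filter_ne_and_ne {ι M : Type*} [Fintype ι] [DecidableEq ι] [AddCommGroup M]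
    (f : ι → M) {j k : ι} (hjk : j ≠ k) :
    ∑ l ∈ Finset.univ.filter (fun l => l ≠ j ∧ l ≠ k), f l = ∑ l, f l - f j - f k := by
  have hfilter :
      Finset.univ.filter (fun l => l ≠ j ∧ l ≠ k) = (Finset.univ.erase j).erase k := by
    ext l
    simp [and_comm]
  rw [hfilter, Finset.sum_erase_eq_sub (by simp [hjk.symm]),
    Finset.sum_erase_eq_sub (Finset.mem_univ j)]

theorem MeasureTheory.Integrable.cond {Ω E : Type*} [MeasurableSpace Ω] [NormedAddCommGroup E]
    {μ : Measure Ω} {f : Ω → E} (hf : Integrable f μ) (s : Set Ω) (hs : μ s ≠ 0) :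
    Integrable f μ[|s] :=
  hf.restrict.smul_measure (ENNReal.inv_ne_top.2 hs)

section

variable [MeasurableSpace Ω] {μ : Measure Ω} {A : Ω → J}

theorem confFun_self (Y : J → Ω → ℝ) (j : J) : confFun μ A Y j j = 0 :=
  sub_self _

theorem condMean_congr_sub_const [IsFiniteMeasure μ] [MeasurableSpace J]
    [MeasurableSingletonClass J] (hA : Measurable A) {Z W : Ω → ℝ} (hW : Integrable W μ)
    {C : ℝ} {l : J} (hl : treatProb μ A l ≠ 0) (hZW : ∀ ω, A ω = l → Z ω = W ω - C) :
    condMean μ A Z l = condMean μ A W l - C := by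
  have hμl : μ {ω | A ω = l} ≠ 0 := fun h => hl (by simp [treatProb, h])
  have := cond_isProbabilityMeasure hμl
  have hZW' : Z =ᵐ[μ[|{ω | A ω = l}]] fun ω => W ω - C :=
    (ae_cond_mem (hA (measurableSet_singleton l))).mono hZW
  rw [condMean, integral_congr_ae hZW', integral_sub (hW.cond _ hμl) (integrable_const C),
    integral_const, probReal_univ, one_smul, condMean]

variable [DecidableEq J] [IsFiniteMeasure μ] [MeasurableSpace J] [MeasurableSingletonClass J]
  {Y : J → Ω → ℝ} {j k : J}

theorem condMean_partialAdjOutcome_left (hA : Measurable A) (hY : Integrable (Y j) μ)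
    (hj : treatProb μ A j ≠ 0) :
    condMean μ A (partialAdjOutcome μ A Y j k) j
      = condMean μ A (Y j) j - treatProb μ A k * confFun μ A Y j k :=
  condMean_congr_sub_const hA hY hj fun ω hω => by simp [partialAdjOutcome, hω]

theorem condMean_partialAdjOutcome_right (hA : Measurable A) (hY : Integrable (Y k) μ)
    (hk : treatProb μ A k ≠ 0) (hjk : j ≠ k) :
    condMean μ A (partialAdjOutcome μ A Y j k) k
      = condMean μ A (Y k) k - treatProb μ A j * confFun μ A Y k j :=
  condMean_congr_sub_const hA hY hk fun ω hω => by simp [partialAdjOutcome, hω, hjk.symm]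

end

section

variable [MeasurableSpace Ω] {μ : Measure Ω} {A : Ω → J}
  [Fintype J] [MeasurableSpace J] [MeasurableSingletonClass J]

theorem sum_treatProb [IsProbabilityMeasure μ] (hA : Measurable A) :
    ∑ l, treatProb μ A l = 1 := by
  have h := sum_measureReal_preimage_singleton (μ := μ) Finset.univ
    (fun l _ => hA (measurableSet_singleton l))
  rwa [Finset.coe_univ, Set.preimage_univ, probReal_univ] at h

theorem integral_eq_sum_treatProb_mul_condMean [IsFiniteMeasure μ] (hA : Measurable A)
    {Z : Ω → ℝ} (hZ : Integrable Z μ) :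
    ∫ ω, Z ω ∂μ = ∑ l, treatProb μ A l * condMean μ A Z l := by
  rw [← sum_meas_smul_cond_fiber hA μ, integrable_finsetSum_measure] at hZ
  conv_lhs => rw [← sum_meas_smul_cond_fiber hA μ]
  simp_rw [integral_finsetSum_measure hZ, integral_smul_measure, smul_eq_mul]
  rfl

theorem sum_treatProb_mul_confFun [IsProbabilityMeasure μ] (hA : Measurable A)
    {Y : J → Ω → ℝ} {j : J} (hY : Integrable (Y j) μ) :
    ∑ l, treatProb μ A l * confFun μ A Y j l
      = condMean μ A (Y j) j - ∫ ω, Y j ω ∂μ := by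
  simp only [confFun, mul_sub, Finset.sum_sub_distrib, ← Finset.sum_mul, sum_treatProb hA,
    one_mul, ← integral_eq_sum_treatProb_mul_condMean hA hY]

end

theorem residual_bias_third_treatment_ignored_general
    [MeasurableSpace Ω] (μ : Measure Ω) [IsProbabilityMeasure μ]
    [Fintype J] [DecidableEq J] [MeasurableSpace J] [MeasurableSingletonClass J]
    (A : Ω → J) (hA : Measurable A)
    (Y : J → Ω → ℝ) (hY : ∀ j, Integrable (Y j) μ)
    (hp : ∀ j, 0 < treatProb μ A j)
    (j k : J) (hjk : j ≠ k) :
    (condMean μ A (partialAdjOutcome μ A Y j k) j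
        - condMean μ A (partialAdjOutcome μ A Y j k) k)
        - ∫ ω, (Y j ω - Y k ω) ∂μ
      = -∑ l ∈ Finset.univ.filter (fun l => l ≠ j ∧ l ≠ k),
          treatProb μ A l * (confFun μ A Y k l - confFun μ A Y j l) := by
  rw [condMean_partialAdjOutcome_left hA (hY j) (hp j).ne',
    condMean_partialAdjOutcome_right hA (hY k) (hp k).ne' hjk,
    Finset.sum_filter_ne_and_ne _ hjk]
  simp only [mul_sub, Finset.sum_sub_distrib, sum_treatProb_mul_confFun hA (hY _),
    integral_sub (hY j) (hY k), confFun_self, mul_zero]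
  ring

theorem residual_bias_third_treatment_ignored
    [MeasurableSpace Ω] (μ : Measure Ω) [IsProbabilityMeasure μ]
    [Fintype J] [Nonempty J] [DecidableEq J] [MeasurableSpace J] [MeasurableSingletonClass J]
    (A : Ω → J) (hA : Measurable A)
    (Y : J → Ω → ℝ) (hY : ∀ j, Integrable (Y j) μ)
    (hp : ∀ j, 0 < treatProb μ A j)
    (j k : J) (hjk : j ≠ k) :
    (condMean μ A (partialAdjOutcome μ A Y j k) j
        - condMean μ A (partialAdjOutcome μ A Y j k) k)
        - ∫ ω, (Y j ω - Y k ω) ∂μ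
      = -∑ l ∈ Finset.univ.filter (fun l => l ≠ j ∧ l ≠ k),
          treatProb μ A l * (confFun μ A Y k l - confFun μ A Y j l) :=
  residual_bias_third_treatment_ignored_general μ A hA Y hY hp j k hjk

end
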